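/- The demote operation is complete: suppose Δ ⊢ θ : Θ ⇒ Θ', the type A has kind K under Δ,Θ, and the substituted type θ(A) has kind K' under Δ,Θ' with K' ≤ K. Let Θ_D = demote(K', Θ, ftv(A) − Δ). Then A has kind K' under Δ,Θ_D. -/

import Mathlib

namespace FreezeML

/-! ### Types, kinds, environments -/

abbrev TVar := ℕ

inductive Kind
  | mono | poly
deriving DecidableEq

/-- System F types: type variables, fully applied constructors, universal types. -/
inductive Ty
  | tvar (a : TVar)
  | con (d : ℕ) (args : List Ty)
  | all (a : TVar) (body : Ty)
deriving Inhabited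

/-- Function types as a distinguished binary constructor. -/
def Ty.arrow (A B : Ty) : Ty := .con 0 [A, B]

/-- Refined kind environments: flexible variables with kinds. -/
abbrev KEnv := List (TVar × Kind)

/-- Type environments. -/
abbrev TEnv := List (ℕ × Ty)

/-- (Finite) type substitutions / instantiations, as association lists;
    identity outside the domain. -/
abbrev Subst := List (TVar × Ty)

/-- View a fixed kind environment (all variables monomorphic) as a refined one. -/
def dk (Δ : List TVar) : KEnv := Δ.map (fun a => (a, Kind.mono))

/-- Free type variables, in order of occurrence. -/
def Ty.ftv : Ty → List TVar
  | .tvar a => [a]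
  | .con _ args => (args.attach.map (fun x => x.1.ftv)).flatten
  | .all a A => A.ftv.filter (fun b => decide (b ≠ a))
  termination_by A => sizeOf A
  decreasing_by
    all_goals simp_wf
    all_goals try (have h := List.sizeOf_lt_of_mem x.2)
    all_goals omega

def lookupSub (θ : Subst) (a : TVar) : Ty :=
  match θ.find? (fun p => p.1 == a) with
  | some p => p.2
  | none => .tvar a

/-- Free type variables of (the range of) a substitution. -/
def ftvSubst (θ : Subst) : List TVar := (θ.map (fun p => p.2.ftv)).flatten

def freshFor (l : List TVar) : TVar := l.foldr max 0 + 1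

/-- Capture-avoiding application of a type substitution. -/
def Ty.applySubst : Ty → Subst → Ty
  | .tvar a, θ => lookupSub θ a
  | .con d args, θ => .con d (args.attach.map (fun x => x.1.applySubst θ))
  | .all a A, θ =>
      let c := freshFor (ftvSubst θ ++ A.ftv ++ [a])
      .all c (A.applySubst ((a, .tvar c) :: θ))
  termination_by A _ => sizeOf A
  decreasing_by
    all_goals simp_wf
    all_goals try (have h := List.sizeOf_lt_of_mem x.2)
    all_goals omega

/-- Composition of substitutions: `apply (comp θ θ') = apply θ ∘ apply θ'`. -/
def compSubst (θ θ' : Subst) : Subst :=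
  θ'.map (fun p => (p.1, p.2.applySubst θ)) ++ θ

def removeSub (θ : Subst) (a : TVar) : Subst := θ.filter (fun p => p.1 != a)

def substEnv (θ : Subst) (Γ : TEnv) : TEnv := Γ.map (fun p => (p.1, p.2.applySubst θ))

def envFtv (Γ : TEnv) : List TVar := (Γ.map (fun p => p.2.ftv)).flatten

def lookupEnv (Γ : TEnv) (x : ℕ) : Option Ty :=
  (Γ.find? (fun p => p.1 == x)).map (fun p => p.2)

/-- Prefix of top-level quantifiers and the guarded body of a type. -/
def Ty.splitAll : Ty → List TVar × Ty
  | .all a A => let p := A.splitAll; (a :: p.1, p.2)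
  | A => ([], A)

def mkAll (Δ : List TVar) (A : Ty) : Ty := Δ.foldr Ty.all A

/-- Syntactic monotypes (no quantifier anywhere). -/
def Ty.isMonoB : Ty → Bool
  | .tvar _ => true
  | .con _ args => args.attach.all (fun x => x.1.isMonoB)
  | .all _ _ => false
  termination_by A => sizeOf A
  decreasing_by
    all_goals simp_wf
    all_goals try (have h := List.sizeOf_lt_of_mem x.2)
    all_goals omega

/-- The list `l` minus the elements of `d`, deduplicated. -/
def listDiff (l d : List TVar) : List TVar :=
  (l.filter (fun a => decide (a ∉ d))).dedup

/-! ### Kinding -/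

/-- Kinding judgement `E ⊢ A : K` over a refined kind environment. -/
inductive HasKind : KEnv → Ty → Kind → Prop
  | var {E a K} : (a, K) ∈ E → HasKind E (.tvar a) K
  | con {E d args K} : (∀ A ∈ args, HasKind E A K) → HasKind E (.con d args) K
  | all {E a A} : HasKind ((a, Kind.mono) :: E) A .poly → HasKind E (.all a A) .poly
  | up {E A} : HasKind E A .mono → HasKind E A .poly

/-- Well-formedness of a substitution: `Δ ⊢ θ : Θ ⇒ Θ'`. -/
def SubstWF (Δ : List TVar) (θ : Subst) (Θ Θ' : KEnv) : Prop :=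
  (∀ p ∈ Θ, HasKind (dk Δ ++ Θ') (lookupSub θ p.1) p.2) ∧
  (∀ a ∈ Δ, lookupSub θ a = .tvar a)

/-- Type instantiation judgement `E ⊢ δ : Δ' ⇒_K Δ''`. -/
def InstWF (E : KEnv) (δ : Subst) (Δ' : List TVar) (K : Kind) (Δ'' : List TVar) : Prop :=
  (∀ a ∈ Δ', HasKind (E ++ dk Δ'') (lookupSub δ a) K) ∧
  (∀ p ∈ E, lookupSub δ p.1 = .tvar p.1)

/-- Well-formedness of a type environment: every type has kind ★ and
    all its free type variables are monomorphic. -/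
def EnvWF (E : KEnv) (Γ : TEnv) : Prop :=
  ∀ p ∈ Γ, HasKind E p.2 Kind.poly ∧ ∀ a ∈ p.2.ftv, (a, Kind.mono) ∈ E

/-! ### Alpha-equivalence -/

/-- Alpha-equivalence of types. -/
inductive Aeq : Ty → Ty → Prop
  | var (a : TVar) : Aeq (.tvar a) (.tvar a)
  | con {d args₁ args₂} : args₁.length = args₂.length →
      (∀ p ∈ args₁.zip args₂, Aeq p.1 p.2) → Aeq (.con d args₁) (.con d args₂)
  | all {a b A B} (c : TVar) : c ∉ A.ftv → c ∉ B.ftv →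
      Aeq (A.applySubst [(a, .tvar c)]) (B.applySubst [(b, .tvar c)]) →
      Aeq (.all a A) (.all b B)

/-! ### FreezeML terms -/

inductive Tm
  | var (x : ℕ)
  | freeze (x : ℕ)
  | lam (x : ℕ) (M : Tm)
  | alam (x : ℕ) (A : Ty) (M : Tm)
  | app (M N : Tm)
  | lett (x : ℕ) (M N : Tm)
  | alet (x : ℕ) (A : Ty) (M N : Tm)

/-- Values. -/
def Tm.isVal : Tm → Bool
  | .var _ => true
  | .freeze _ => true
  | .lam _ _ => true
  | .alam _ _ _ => true
  | .app _ _ => false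
  | .lett _ M N => M.isVal && N.isVal
  | .alet _ _ M N => M.isVal && N.isVal

/-- Guarded values. -/
def Tm.isGVal : Tm → Bool
  | .var _ => true
  | .freeze _ => false
  | .lam _ _ => true
  | .alam _ _ _ => true
  | .app _ _ => false
  | .lett _ M N => M.isVal && N.isGVal
  | .alet _ _ M N => M.isVal && N.isGVal

/-- `gen`: the generalisable type variables of `A` relative to `E`, paired as in the paper. -/
def genVars (E : KEnv) (A : Ty) (M : Tm) : List TVar × List TVar :=
  let Δ' := listDiff A.ftv (E.map Prod.fst)
  if M.isGVal then (Δ', Δ') else ([], Δ')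

/-- The `⇕` judgement: generalise guarded values, monomorphically instantiate non-values. -/
def Updown (E : KEnv) (Δ'' : List TVar) (M : Tm) (A' A : Ty) : Prop :=
  if M.isGVal then A = mkAll Δ'' A'
  else ∃ δ, InstWF E δ Δ'' Kind.mono [] ∧ A = A'.applySubst δ

/-- `split`: split a let-annotation depending on whether the bound term is a guarded value. -/
def splitTy (A : Ty) (M : Tm) : List TVar × Ty :=
  if M.isGVal then A.splitAll else ([], A)

/-! ### FreezeML typing (via the well-founded `J` function) -/

/-- Principality relative to a given typing set. -/
def PrincipalOn (X : Set (KEnv × TEnv × Ty)) (E : KEnv) (Γ : TEnv)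
    (Δ' : List TVar) (A' : Ty) : Prop :=
  Δ' = listDiff A'.ftv (E.map Prod.fst) ∧
  (E ++ dk Δ', Γ, A') ∈ X ∧
  ∀ Δ'' A'', Δ'' = listDiff A''.ftv (E.map Prod.fst) →
    (E ++ dk Δ'', Γ, A'') ∈ X →
    ∃ δ, InstWF E δ Δ' Kind.poly Δ'' ∧ A'.applySubst δ = A''

/-- The set of valid typing triples `(E, Γ, A)` of a term,
    defined by recursion on the term. -/
def TypingJ : Tm → Set (KEnv × TEnv × Ty)
  | .freeze x => {p | lookupEnv p.2.1 x = some p.2.2 ∧ EnvWF p.1 p.2.1 ∧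
      HasKind p.1 p.2.2 Kind.poly}
  | .var x => {p | ∃ A₀ δ, lookupEnv p.2.1 x = some A₀ ∧
      InstWF p.1 δ A₀.splitAll.1 Kind.poly [] ∧
      p.2.2 = A₀.splitAll.2.applySubst δ ∧
      EnvWF p.1 p.2.1 ∧ HasKind p.1 p.2.2 Kind.poly}
  | .lam x M => {p | ∃ S B, p.2.2 = Ty.arrow S B ∧ S.isMonoB ∧
      (p.1, (x, S) :: p.2.1, B) ∈ TypingJ M}
  | .alam x A M => {p | ∃ B, p.2.2 = Ty.arrow A B ∧
      (p.1, (x, A) :: p.2.1, B) ∈ TypingJ M}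
  | .app M N => {p | ∃ A, (p.1, p.2.1, Ty.arrow A p.2.2) ∈ TypingJ M ∧
      (p.1, p.2.1, A) ∈ TypingJ N}
  | .lett x M N => {p | ∃ A' A,
      Updown p.1 (listDiff A'.ftv (p.1.map Prod.fst)) M A' A ∧
      PrincipalOn (TypingJ M) p.1 p.2.1 (listDiff A'.ftv (p.1.map Prod.fst)) A' ∧
      (p.1, (x, A) :: p.2.1, p.2.2) ∈ TypingJ N}
  | .alet x A M N => {p |
      (p.1 ++ dk (splitTy A M).1, p.2.1, (splitTy A M).2) ∈ TypingJ M ∧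
      (p.1, (x, A) :: p.2.1, p.2.2) ∈ TypingJ N}

/-- The FreezeML typing relation. -/
def FzTyping (E : KEnv) (Γ : TEnv) (M : Tm) (A : Ty) : Prop :=
  (E, Γ, A) ∈ TypingJ M

/-- The principality predicate of the paper. -/
def Principal (E : KEnv) (Γ : TEnv) (M : Tm) (Δ' : List TVar) (A' : Ty) : Prop :=
  PrincipalOn (TypingJ M) E Γ Δ' A'

/-- Well-scopedness of terms: all annotations are well-kinded. -/
inductive TermWF : List TVar → Tm → Prop
  | var {Δ x} : TermWF Δ (.var x)
  | freeze {Δ x} : TermWF Δ (.freeze x)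
  | lam {Δ x M} : TermWF Δ M → TermWF Δ (.lam x M)
  | alam {Δ x A M} : HasKind (dk Δ) A Kind.poly → TermWF Δ M → TermWF Δ (.alam x A M)
  | app {Δ M N} : TermWF Δ M → TermWF Δ N → TermWF Δ (.app M N)
  | lett {Δ x M N} : TermWF Δ M → TermWF Δ N → TermWF Δ (.lett x M N)
  | alet {Δ x A M N} : HasKind (dk Δ) A Kind.poly →
      TermWF (Δ ++ (splitTy A M).1) M → TermWF Δ N → TermWF Δ (.alet x A M N)

/-! ### Demotion and unification -/

/-- Demote to kind • all variables of `Θ` occurring in `Δ'` (no-op for ★). -/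
def demote (K : Kind) (Θ : KEnv) (Δ' : List TVar) : KEnv :=
  match K with
  | .poly => Θ
  | .mono => Θ.map (fun p => if p.1 ∈ Δ' then (p.1, Kind.mono) else p)

/-- Remove a flexible variable from a refined kind environment, returning its kind. -/
def removeK : KEnv → TVar → Option (Kind × KEnv)
  | [], _ => none
  | p :: Θ, a =>
      if p.1 = a then some (p.2, Θ)
      else (removeK Θ a).map (fun q => (q.1, p :: q.2))

mutual
/-- Big-step relation of the unification algorithm:
    `UnifyRel Δ Θ A B Θ' θ` holds iff `unify(Δ, Θ, A, B)` succeeds with result `(Θ', θ)`. -/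
inductive UnifyRel : List TVar → KEnv → Ty → Ty → KEnv → Subst → Prop
  | refl {Δ Θ a} : UnifyRel Δ Θ (.tvar a) (.tvar a) Θ []
  | flexL {Δ Θ a A K Θ₀ Θ₁} : A ≠ .tvar a →
      removeK Θ a = some (K, Θ₀) →
      Θ₁ = demote K Θ₀ (listDiff A.ftv Δ) →
      HasKind (dk Δ ++ Θ₁) A K →
      UnifyRel Δ Θ (.tvar a) A Θ₁ [(a, A)]
  | flexR {Δ Θ a A K Θ₀ Θ₁} : A ≠ .tvar a →
      removeK Θ a = some (K, Θ₀) →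
      Θ₁ = demote K Θ₀ (listDiff A.ftv Δ) →
      HasKind (dk Δ ++ Θ₁) A K →
      UnifyRel Δ Θ A (.tvar a) Θ₁ [(a, A)]
  | con {Δ Θ d args₁ args₂ Θ' θ} :
      UnifyList Δ Θ args₁ args₂ Θ' θ →
      UnifyRel Δ Θ (.con d args₁) (.con d args₂) Θ' θ
  | all {Δ Θ a b A B Θ' θ} (c : TVar) :
      c ∉ Δ → c ∉ Θ.map Prod.fst →
      c ∉ (Ty.all a A).ftv → c ∉ (Ty.all b B).ftv →
      UnifyRel (c :: Δ) Θ (A.applySubst [(a, .tvar c)]) (B.applySubst [(b, .tvar c)]) Θ' θ →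
      c ∉ ftvSubst θ →
      UnifyRel Δ Θ (.all a A) (.all b B) Θ' θ

/-- Componentwise unification of argument lists, threading substitutions. -/
inductive UnifyList : List TVar → KEnv → List Ty → List Ty → KEnv → Subst → Prop
  | nil {Δ Θ} : UnifyList Δ Θ [] [] Θ []
  | cons {Δ Θ A B As Bs Θ₁ θ₁ Θ₂ θ₂} :
      UnifyRel Δ Θ A B Θ₁ θ₁ →
      UnifyList Δ Θ₁ (As.map (fun C => C.applySubst θ₁)) (Bs.map (fun C => C.applySubst θ₁)) Θ₂ θ₂ →
      UnifyList Δ Θ (A :: As) (B :: Bs) Θ₂ (compSubst θ₂ θ₁)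
end

/-! ### The type inference algorithm (as a big-step relation) -/

def removeVars (Θ : KEnv) (l : List TVar) : KEnv :=
  Θ.filter (fun p => !(l.contains p.1))

/-- Big-step relation of the inference algorithm:
    `InferRel Δ Θ Γ M Θ' θ A` holds iff `infer(Δ, Θ, Γ, M)` succeeds with `(Θ', θ, A)`. -/
inductive InferRel : List TVar → KEnv → TEnv → Tm → KEnv → Subst → Ty → Prop
  | freeze {Δ Θ Γ x A} : lookupEnv Γ x = some A →
      InferRel Δ Θ Γ (.freeze x) Θ [] A
  | var {Δ Θ Γ x A₀ as H} (bs : List TVar) :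
      lookupEnv Γ x = some A₀ → A₀.splitAll = (as, H) →
      bs.length = as.length → bs.Nodup →
      (∀ b ∈ bs, b ∉ Δ ∧ b ∉ Θ.map Prod.fst ∧ b ∉ A₀.ftv ∧ b ∉ envFtv Γ) →
      InferRel Δ Θ Γ (.var x) (Θ ++ bs.map (fun b => (b, Kind.poly))) []
        (H.applySubst (as.zip (bs.map Ty.tvar)))
  | lam {Δ Θ Γ x M Θ₁ θ₁ B S} (a : TVar) :
      a ∉ Δ → a ∉ Θ.map Prod.fst → a ∉ envFtv Γ →
      InferRel Δ (Θ ++ [(a, Kind.mono)]) ((x, .tvar a) :: Γ) M Θ₁ θ₁ B →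
      lookupSub θ₁ a = S → S.isMonoB →
      InferRel Δ Θ Γ (.lam x M) Θ₁ (removeSub θ₁ a) (Ty.arrow S B)
  | alam {Δ Θ Γ x A M Θ₁ θ B} :
      InferRel Δ Θ ((x, A) :: Γ) M Θ₁ θ B →
      InferRel Δ Θ Γ (.alam x A M) Θ₁ θ (Ty.arrow A B)
  | app {Δ Θ Γ M N Θ₁ θ₁ A' Θ₂ θ₂ A Θ₃ θ₃'} (b : TVar) :
      InferRel Δ Θ Γ M Θ₁ θ₁ A' →
      InferRel Δ Θ₁ (substEnv θ₁ Γ) N Θ₂ θ₂ A →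
      b ∉ Δ → b ∉ Θ₂.map Prod.fst → b ∉ (A'.applySubst θ₂).ftv → b ∉ A.ftv →
      UnifyRel Δ (Θ₂ ++ [(b, Kind.poly)]) (A'.applySubst θ₂) (Ty.arrow A (.tvar b)) Θ₃ θ₃' →
      InferRel Δ Θ Γ (.app M N) Θ₃
        (compSubst (removeSub θ₃' b) (compSubst θ₂ θ₁)) (lookupSub θ₃' b)
  | lett {Δ Θ Γ x M N Θ₁ θ₁ A Δ' Δ'' Δ''' Θ₁' Θ₂ θ₂ B} :
      InferRel Δ Θ Γ M Θ₁ θ₁ A →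
      Δ' = listDiff (ftvSubst θ₁) Δ →
      genVars (dk (Δ ++ Δ')) A M = (Δ'', Δ''') →
      Θ₁' = demote Kind.mono Θ₁ Δ''' →
      InferRel Δ (removeVars Θ₁' Δ'') ((x, mkAll Δ'' A) :: substEnv θ₁ Γ) N Θ₂ θ₂ B →
      InferRel Δ Θ Γ (.lett x M N) Θ₂ (compSubst θ₂ θ₁) B
  | alet {Δ Θ Γ x A M N Δ' A' Θ₁ θ₁ A₁ Θ₂ θ₂' θ₂ Θ₃ θ₃ B} :
      splitTy A M = (Δ', A') →
      InferRel (Δ ++ Δ') Θ Γ M Θ₁ θ₁ A₁ →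
      UnifyRel (Δ ++ Δ') Θ₁ A' A₁ Θ₂ θ₂' →
      θ₂ = compSubst θ₂' θ₁ →
      (∀ a ∈ ftvSubst θ₂, a ∉ Δ') →
      InferRel Δ Θ₂ ((x, A) :: substEnv θ₂ Γ) N Θ₃ θ₃ B →
      InferRel Δ Θ Γ (.alet x A M N) Θ₃ (compSubst θ₃ θ₂) B

/-! ### Call-by-value System F -/

inductive FTm
  | var (x : ℕ)
  | lam (x : ℕ) (A : Ty) (M : FTm)
  | app (M N : FTm)
  | tlam (a : TVar) (V : FTm)
  | tapp (M : FTm) (A : Ty)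

/-- Instantiations `I ::= x | I A`. -/
def FTm.isInst : FTm → Bool
  | .var _ => true
  | .tapp M _ => M.isInst
  | _ => false

/-- System F values. -/
def FTm.isVal : FTm → Bool
  | .var _ => true
  | .lam _ _ _ => true
  | .tlam _ _ => true
  | .tapp M _ => M.isInst
  | .app _ _ => false

/-- System F typing (call-by-value, with the value restriction on type abstraction). -/
inductive FTyping : List TVar → TEnv → FTm → Ty → Prop
  | var {Δ Γ x A} : lookupEnv Γ x = some A → FTyping Δ Γ (.var x) A
  | lam {Δ Γ x A M B} : FTyping Δ ((x, A) :: Γ) M B →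
      FTyping Δ Γ (.lam x A M) (Ty.arrow A B)
  | app {Δ Γ M N A B} : FTyping Δ Γ M (Ty.arrow A B) → FTyping Δ Γ N A →
      FTyping Δ Γ (.app M N) B
  | tlam {Δ Γ a V A} : V.isVal → FTyping (a :: Δ) Γ V A →
      FTyping Δ Γ (.tlam a V) (.all a A)
  | tapp {Δ Γ M a B A} : FTyping Δ Γ M (.all a B) → HasKind (dk Δ) A Kind.poly →
      FTyping Δ Γ (.tapp M A) (B.applySubst [(a, A)])

def mkTApp (M : FTm) (As : List Ty) : FTm := As.foldl FTm.tapp M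

def mkTLam (as : List TVar) (M : FTm) : FTm := as.foldr FTm.tlam M

/-! ### Translation from System F to FreezeML -/

/-- The derivation-directed translation `⟦-⟧` from System F to FreezeML.
    `N@` is sugar for `let y = N in y`. -/
inductive TransFtoFz : List TVar → TEnv → FTm → Ty → Tm → Prop
  | var {Δ Γ x A} : lookupEnv Γ x = some A →
      TransFtoFz Δ Γ (.var x) A (.freeze x)
  | lam {Δ Γ x A M B M'} : TransFtoFz Δ ((x, A) :: Γ) M B M' →
      TransFtoFz Δ Γ (.lam x A M) (Ty.arrow A B) (.alam x A M')
  | app {Δ Γ M N A B M' N'} : TransFtoFz Δ Γ M (Ty.arrow A B) M' →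
      TransFtoFz Δ Γ N A N' →
      TransFtoFz Δ Γ (.app M N) B (.app M' N')
  | tlam {Δ Γ a V B V'} (x y : ℕ) : x ∉ Γ.map Prod.fst → y ∉ Γ.map Prod.fst → x ≠ y →
      V.isVal → TransFtoFz (a :: Δ) Γ V B V' →
      TransFtoFz Δ Γ (.tlam a V) (.all a B)
        (.alet x (.all a B) (.lett y V' (.var y)) (.freeze x))
  | tapp {Δ Γ M a B A M'} (x y : ℕ) : x ∉ Γ.map Prod.fst → y ∉ Γ.map Prod.fst → x ≠ y →
      TransFtoFz Δ Γ M (.all a B) M' → HasKind (dk Δ) A Kind.poly →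
      TransFtoFz Δ Γ (.tapp M A) (B.applySubst [(a, A)])
        (.alet x (B.applySubst [(a, A)]) (.lett y M' (.var y)) (.freeze x))

/-! ### Translation from FreezeML to System F -/

/-- The derivation-directed translation from FreezeML to System F
    (the principality side condition is not used). -/
inductive TransFzToF : List TVar → TEnv → Tm → Ty → FTm → Prop
  | freeze {Δ Γ x A} : lookupEnv Γ x = some A →
      TransFzToF Δ Γ (.freeze x) A (.var x)
  | var {Δ Γ x A₀ as H δ} : lookupEnv Γ x = some A₀ → A₀.splitAll = (as, H) →
      InstWF (dk Δ) δ as Kind.poly [] →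
      TransFzToF Δ Γ (.var x) (H.applySubst δ) (mkTApp (.var x) (as.map (lookupSub δ)))
  | lam {Δ Γ x M S B M'} : S.isMonoB →
      TransFzToF Δ ((x, S) :: Γ) M B M' →
      TransFzToF Δ Γ (.lam x M) (Ty.arrow S B) (.lam x S M')
  | alam {Δ Γ x A M B M'} :
      TransFzToF Δ ((x, A) :: Γ) M B M' →
      TransFzToF Δ Γ (.alam x A M) (Ty.arrow A B) (.lam x A M')
  | app {Δ Γ M N A B M' N'} :
      TransFzToF Δ Γ M (Ty.arrow A B) M' → TransFzToF Δ Γ N A N' →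
      TransFzToF Δ Γ (.app M N) B (.app M' N')
  | lett {Δ Γ x M N A' A Δ' Δ'' B M' N'} :
      genVars (dk Δ) A' M = (Δ', Δ'') →
      Updown (dk Δ) Δ'' M A' A →
      TransFzToF (Δ ++ Δ'') Γ M A' M' →
      TransFzToF Δ ((x, A) :: Γ) N B N' →
      TransFzToF Δ Γ (.lett x M N) B (.app (.lam x A N') (mkTLam Δ' M'))
  | alet {Δ Γ x A M N Δ' A' B M' N'} :
      splitTy A M = (Δ', A') →
      TransFzToF (Δ ++ Δ') Γ M A' M' →
      TransFzToF Δ ((x, A) :: Γ) N B N' →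
      TransFzToF Δ Γ (.alet x A M N) B (.app (.lam x A N') (mkTLam Δ' M'))

/-! ### ML -/

/-- ML typing (monotypes, type schemes, value restriction on let-generalisation). -/
inductive MLTyping : List TVar → TEnv → Tm → Ty → Prop
  | var {Δ Γ x P as S δ} : lookupEnv Γ x = some P → P.splitAll = (as, S) →
      S.isMonoB → InstWF (dk Δ) δ as Kind.mono [] →
      MLTyping Δ Γ (.var x) (S.applySubst δ)
  | lam {Δ Γ x M S T} : S.isMonoB → MLTyping Δ ((x, S) :: Γ) M T →
      MLTyping Δ Γ (.lam x M) (Ty.arrow S T)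
  | app {Δ Γ M N S T} : MLTyping Δ Γ M (Ty.arrow S T) → MLTyping Δ Γ N S →
      MLTyping Δ Γ (.app M N) T
  | lett {Δ Γ x M N S T Δ'} :
      Δ' = (if M.isVal then listDiff S.ftv Δ else []) →
      MLTyping (Δ ++ Δ') Γ M S →
      MLTyping Δ ((x, mkAll Δ' S) :: Γ) N T →
      MLTyping Δ Γ (.lett x M N) T

/-- The derivation-directed translation from ML to System F. -/
inductive MLTrans : List TVar → TEnv → Tm → Ty → FTm → Prop
  | var {Δ Γ x P as S δ} : lookupEnv Γ x = some P → P.splitAll = (as, S) →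
      S.isMonoB → InstWF (dk Δ) δ as Kind.mono [] →
      MLTrans Δ Γ (.var x) (S.applySubst δ) (mkTApp (.var x) (as.map (lookupSub δ)))
  | lam {Δ Γ x M S T M'} : S.isMonoB → MLTrans Δ ((x, S) :: Γ) M T M' →
      MLTrans Δ Γ (.lam x M) (Ty.arrow S T) (.lam x S M')
  | app {Δ Γ M N S T M' N'} : MLTrans Δ Γ M (Ty.arrow S T) M' → MLTrans Δ Γ N S N' →
      MLTrans Δ Γ (.app M N) T (.app M' N')
  | lett {Δ Γ x M N S T Δ' M' N'} :
      Δ' = (if M.isVal then listDiff S.ftv Δ else []) →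
      MLTrans (Δ ++ Δ') Γ M S M' →
      MLTrans Δ ((x, mkAll Δ' S) :: Γ) N T N' →
      MLTrans Δ Γ (.lett x M N) T (.app (.lam x (mkAll Δ' S) N') (mkTLam Δ' M'))

/-- `K' ≤ K` on kinds. -/
def KindLe (K' K : Kind) : Prop := K' = Kind.mono ∨ K' = K

end FreezeML

/-! A substitution maps `∀`-types to `∀`-types, so if `θ(A)` has kind • then `A` is
quantifier-free, and a quantifier-free type has kind • as soon as all its free variables do.
Those in `Δ` are monomorphic already; the others are bound in `Θ` (because `A` is well-kinded)
and occur in `ftv(A) − Δ`, so `demote` makes them monomorphic. -/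

namespace FreezeML

theorem Ty.induction_on {P : Ty → Prop} (tvar : ∀ a, P (.tvar a))
    (con : ∀ d args, (∀ B ∈ args, P B) → P (.con d args))
    (all : ∀ a A, P A → P (.all a A)) : ∀ A, P A
  | .tvar a => tvar a
  | .con d args => con d args fun B _ => Ty.induction_on tvar con all B
  | .all a A => all a A (Ty.induction_on tvar con all A)

theorem Ty.mem_ftv_con {a : TVar} {d : ℕ} {args : List Ty} :
    a ∈ (Ty.con d args).ftv ↔ ∃ B ∈ args, a ∈ B.ftv := by
  rw [Ty.ftv]
  simp

theorem Ty.isMonoB_con {d : ℕ} {args : List Ty} :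
    (Ty.con d args).isMonoB ↔ ∀ B ∈ args, B.isMonoB := by
  rw [Ty.isMonoB]
  simp

theorem Ty.applySubst_con (d : ℕ) (args : List Ty) (θ : Subst) :
    (Ty.con d args).applySubst θ = .con d (args.map (·.applySubst θ)) := by
  rw [Ty.applySubst]
  simp

theorem HasKind.exists_mem_of_mem_ftv {E : KEnv} {A : Ty} {K : Kind} (h : HasKind E A K)
    {a : TVar} (ha : a ∈ A.ftv) : ∃ K₀, (a, K₀) ∈ E := by
  induction h with
  | var h =>
      rw [Ty.ftv, List.mem_singleton] at ha
      exact ⟨_, ha ▸ h⟩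
  | con _ ih =>
      obtain ⟨B, hB, haB⟩ := Ty.mem_ftv_con.1 ha
      exact ih B hB haB
  | all _ ih =>
      rw [Ty.ftv, List.mem_filter, decide_eq_true_eq] at ha
      obtain ⟨K₀, hK₀⟩ := ih ha.1
      exact ⟨K₀, (List.mem_cons.1 hK₀).resolve_left fun h => ha.2 (congrArg Prod.fst h)⟩
  | up _ ih => exact ih ha

theorem HasKind.isMonoB_of_applySubst {E : KEnv} {θ : Subst} {A : Ty}
    (h : HasKind E (A.applySubst θ) .mono) : A.isMonoB := by
  induction A using Ty.induction_on with
  | tvar a => simp [Ty.isMonoB]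
  | con d args ih =>
      rw [Ty.applySubst_con] at h
      cases h with
      | con hargs => exact Ty.isMonoB_con.2 fun B hB => ih B hB (hargs _ (List.mem_map_of_mem hB))
  | all a A _ =>
      rw [Ty.applySubst] at h
      cases h

theorem HasKind.mono_of_isMonoB {E : KEnv} {A : Ty} (hA : A.isMonoB)
    (hftv : ∀ a ∈ A.ftv, (a, Kind.mono) ∈ E) : HasKind E A .mono := by
  induction A using Ty.induction_on with
  | tvar a => exact .var (hftv a (by simp [Ty.ftv]))
  | con d args ih =>
      exact .con fun B hB => ih B hB (Ty.isMonoB_con.1 hA B hB)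
        fun a ha => hftv a (Ty.mem_ftv_con.2 ⟨B, hB, ha⟩)
  | all => simp [Ty.isMonoB] at hA

theorem mem_demote_mono {Θ : KEnv} {L : List TVar} {a : TVar} {K : Kind} (h : (a, K) ∈ Θ)
    (ha : a ∈ L) : (a, Kind.mono) ∈ demote .mono Θ L :=
  List.mem_map.2 ⟨(a, K), h, by simp [ha]⟩

/-- completeness of demotion. -/
theorem demote_complete {Δ : List TVar} {Θ Θ' : KEnv} {θ : Subst} {A : Ty} {K K' : Kind}
    (hθ : SubstWF Δ θ Θ Θ') (hA : HasKind (dk Δ ++ Θ) A K)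
    (hA' : HasKind (dk Δ ++ Θ') (A.applySubst θ) K') (hle : KindLe K' K) :
    HasKind (dk Δ ++ demote K' Θ (listDiff A.ftv Δ)) A K' := by
  cases K' with
  | poly =>
      obtain h | rfl := hle
      · cases h
      simpa only [demote] using hA
  | mono =>
      refine .mono_of_isMonoB hA'.isMonoB_of_applySubst fun a ha => ?_
      by_cases haΔ : a ∈ Δ
      · exact List.mem_append_left _ (List.mem_map_of_mem haΔ)
      obtain ⟨K₀, hK₀⟩ := hA.exists_mem_of_mem_ftv ha
      have haΘ : (a, K₀) ∈ Θ := (List.mem_append.1 hK₀).resolve_left fun h => by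
        obtain ⟨b, hb, hba⟩ := List.mem_map.1 h
        exact haΔ ((Prod.mk.inj hba).1 ▸ hb)
      exact List.mem_append_right _ <| mem_demote_mono haΘ <| by simp [listDiff, ha, haΔ]

end FreezeML
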